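/- For every K > 0 there exists ε_0 > 0 such that for all 0 < ε < ε_0 the following holds for F_ε(A) = S_1(A^{−1}) − ε S_n(A^{−1}) on positive definite Hermitian n×n matrices: if A_t, t ∈ [0,1], is a continuous path of positive definite Hermitian matrices with F_ε(A_t) < K for all t and S_1(A_0^{−1}) < K, then S_1(A_t^{−1}) < K + 1 for all t ∈ [0,1]. In particular, the connected component of the set {F_ε < K} containing the set {S_1(A^{−1}) < K} is contained in {S_1(A^{−1}) < K + 1}. -/

import Mathlib

/-!
For positive definite `A`, `S_1(A⁻¹) = tr A⁻¹` and `S_n(A⁻¹) = (det A)⁻¹`, so AM-GM for the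
eigenvalues of `A⁻¹` gives `S_n(A⁻¹) ≤ (S_1(A⁻¹) / n)^n`. On the level set `S_1(A⁻¹) = K + 1` this
forces `F_ε(A) ≥ K + 1 - ε ((K + 1) / n)^n > K` as soon as `ε < (n / (K + 1))^n`, so that level set
misses `{F_ε < K}`. Since `tr A⁻¹` is continuous, by the intermediate value theorem it cannot climb
from below `K` to `K + 1` on a connected subset of `{F_ε < K}`, such as the image of a path.
-/

open Matrix Polynomial

/-- `S_k(A)` for an `n × n` matrix `A`: the `k`-th elementary symmetric function of the
eigenvalues of `A`, i.e. the coefficient of `(-x)^(n-k)` in `det (A - x I)`. -/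
noncomputable def SmatR (n : ℕ) (k : ℤ) (A : Matrix (Fin n) (Fin n) ℝ) : ℝ :=
  if 0 ≤ k ∧ k ≤ (n : ℤ) then (-1 : ℝ) ^ k.toNat * (Matrix.charpoly A).coeff (n - k.toNat)
  else 0

/-- `S_1(A⁻¹) = S_{n-1}(A)/S_n(A)`, the sum of the reciprocals of the eigenvalues of `A`. -/
noncomputable def S1inv (n : ℕ) (A : Matrix (Fin n) (Fin n) ℝ) : ℝ :=
  SmatR n ((n : ℤ) - 1) A / SmatR n (n : ℤ) A

/-- `S_n(A⁻¹) = S_0(A)/S_n(A) = 1/det A`. -/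
noncomputable def Sninv (n : ℕ) (A : Matrix (Fin n) (Fin n) ℝ) : ℝ :=
  SmatR n 0 A / SmatR n (n : ℤ) A

/-- The operator `F_ε(A) = S_1(A⁻¹) - ε S_n(A⁻¹)`. -/
noncomputable def Fe (n : ℕ) (ε : ℝ) (A : Matrix (Fin n) (Fin n) ℝ) : ℝ :=
  S1inv n A - ε * Sninv n A

theorem Real.prod_le_sum_div_card_pow {ι : Type*} [Fintype ι] {z : ι → ℝ}
    (hz : ∀ i, 0 ≤ z i) :
    ∏ i, z i ≤ ((∑ i, z i) / Fintype.card ι) ^ Fintype.card ι := by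
  rcases isEmpty_or_nonempty ι with _ | _
  · simp
  set N : ℝ := (Fintype.card ι : ℝ)
  have hN : N ≠ 0 := by positivity
  have hamgm := Real.geom_mean_le_arith_mean_weighted Finset.univ (fun _ => N⁻¹) z
    (fun _ _ => by positivity) (by simp [N, hN]) (fun i _ => hz i)
  calc ∏ i, z i = (∏ i, z i ^ N⁻¹) ^ Fintype.card ι := by
        rw [← Finset.prod_pow]
        refine Finset.prod_congr rfl fun i _ => ?_
        rw [← Real.rpow_mul_natCast (hz i), inv_mul_cancel₀ hN, Real.rpow_one]
    _ ≤ (∑ i, N⁻¹ * z i) ^ Fintype.card ι :=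
        pow_le_pow_left₀ (Finset.prod_nonneg fun i _ => Real.rpow_nonneg (hz i) _) hamgm _
    _ = ((∑ i, z i) / N) ^ Fintype.card ι := by rw [← Finset.mul_sum, inv_mul_eq_div]

namespace Matrix
variable {m : Type*} [Fintype m] [DecidableEq m]

theorem PosSemidef.det_le_trace_div_card_pow {A : Matrix m m ℝ} (hA : A.PosSemidef) :
    A.det ≤ (A.trace / Fintype.card m) ^ Fintype.card m := by
  rw [hA.isHermitian.det_eq_prod_eigenvalues, hA.isHermitian.trace_eq_sum_eigenvalues]
  simpa using Real.prod_le_sum_div_card_pow hA.eigenvalues_nonneg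

theorem trace_inv_eq_charpoly_coeff_one_div_det {K : Type*} [Field K] [Nonempty m]
    (A : Matrix m m K) :
    A⁻¹.trace = (-1) ^ (Fintype.card m - 1) * A.charpoly.coeff 1 / A.det := by
  by_cases hdet : A.det = 0
  · simp [nonsing_inv_apply_not_isUnit, hdet]
  have hA : IsUnit A := (isUnit_iff_isUnit_det A).mpr (isUnit_iff_ne_zero.mpr hdet)
  have hn : 0 < Fintype.card m := Fintype.card_pos
  have hcoeff : A.charpoly.reverse.coeff (Fintype.card m - 1) = A.charpoly.coeff 1 := by
    rw [coeff_reverse, charpoly_natDegree_eq_dim, revAt_le (Nat.sub_le _ _),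
      Nat.sub_sub_self hn]
  have hsign : (-1 : K) ^ Fintype.card m = -(-1) ^ (Fintype.card m - 1) := by
    rw [← Nat.sub_add_cancel hn, pow_succ, Nat.add_sub_cancel, mul_neg_one]
  rw [trace_eq_neg_charpoly_coeff, charpoly_inv A hA, ← reverse_charpoly, ← C_1, ← C_neg,
    ← C_pow, ← C_mul, coeff_C_mul, hcoeff, Ring.inverse_eq_inv', hsign]
  ring

end Matrix

variable {n : ℕ}

theorem SmatR_zero (A : Matrix (Fin n) (Fin n) ℝ) : SmatR n 0 A = 1 := by
  have h := A.charpoly_monic.coeff_natDegree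
  rw [charpoly_natDegree_eq_dim, Fintype.card_fin] at h
  simp [SmatR, h]

theorem SmatR_self (A : Matrix (Fin n) (Fin n) ℝ) : SmatR n n A = A.det := by
  simp [SmatR, det_eq_sign_charpoly_coeff]

theorem Sninv_eq_inv_det (A : Matrix (Fin n) (Fin n) ℝ) : Sninv n A = A.det⁻¹ := by
  rw [Sninv, SmatR_zero, SmatR_self, one_div]

theorem S1inv_eq_trace_inv (A : Matrix (Fin n) (Fin n) ℝ) : S1inv n A = A⁻¹.trace := by
  rcases n with _ | k
  · simp [S1inv, SmatR]
  · have hk : ((k + 1 : ℕ) - 1 : ℤ).toNat = k := by omega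
    rw [trace_inv_eq_charpoly_coeff_one_div_det, S1inv, SmatR_self, SmatR, if_pos (by omega), hk,
      Fintype.card_fin, Nat.add_sub_cancel, Nat.add_sub_cancel_left]

theorem continuousOn_S1inv : ContinuousOn (S1inv n) {A | A.det ≠ 0} := by
  rw [show S1inv n = fun A => A⁻¹.trace from funext S1inv_eq_trace_inv]
  refine fun A hA => (continuous_id.matrix_trace.continuousAt.comp
    (continuousAt_matrix_inv A ?_)).continuousWithinAt
  rw [Ring.inverse_eq_inv']
  exact continuousAt_inv₀ hA

theorem IsPreconnected.forall_lt_of_forall_ne {X α : Type*} [TopologicalSpace X]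
    [LinearOrder α] [TopologicalSpace α] [OrderClosedTopology α] {s : Set X}
    (hs : IsPreconnected s) {f : X → α} (hf : ContinuousOn f s) {a : X} (ha : a ∈ s) {c : α}
    (hfa : f a < c) (hne : ∀ x ∈ s, f x ≠ c) : ∀ x ∈ s, f x < c := by
  intro x hx
  by_contra! hcx
  obtain ⟨y, hy, hfy⟩ := hs.intermediate_value ha hx hf ⟨hfa.le, hcx⟩
  exact hne y hy hfy

theorem S1inv_lt_of_Fe_lt {K ε : ℝ} {A : Matrix (Fin n) (Fin n) ℝ} (hA : A.PosSemidef)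
    (hε : 0 ≤ ε) (hεA : ε * (S1inv n A / n) ^ n < 1) (hF : Fe n ε A < K) :
    S1inv n A < K + 1 := by
  have hSn : Sninv n A ≤ (S1inv n A / n) ^ n := by
    rw [Sninv_eq_inv_det, S1inv_eq_trace_inv, ← Ring.inverse_eq_inv', ← det_nonsing_inv]
    simpa using hA.inv.det_le_trace_div_card_pow
  calc S1inv n A = Fe n ε A + ε * Sninv n A := by rw [Fe]; ring
    _ ≤ Fe n ε A + ε * (S1inv n A / n) ^ n := by gcongr
    _ < K + 1 := by linarith

theorem connectedComponentIn_subset_S1inv_lt {K ε : ℝ} (hε : 0 ≤ ε)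
    (hεK : ε * ((K + 1) / n) ^ n < 1) {A₀ : Matrix (Fin n) (Fin n) ℝ}
    (hA₀ : S1inv n A₀ < K) :
    connectedComponentIn {A : Matrix (Fin n) (Fin n) ℝ | A.PosDef ∧ Fe n ε A < K} A₀ ⊆
      {A | S1inv n A < K + 1} := by
  intro B hB
  set S := {A : Matrix (Fin n) (Fin n) ℝ | A.PosDef ∧ Fe n ε A < K}
  have hsub := connectedComponentIn_subset S A₀
  have hA₀mem := mem_connectedComponentIn (connectedComponentIn_nonempty_iff.mp ⟨B, hB⟩)
  refine isPreconnected_connectedComponentIn.forall_lt_of_forall_ne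
    (continuousOn_S1inv.mono fun A hA => (hsub hA).1.det_pos.ne') hA₀mem (by linarith) ?_ B hB
  intro A hA hAK
  exact (S1inv_lt_of_Fe_lt (hsub hA).1.posSemidef hε (by rwa [hAK]) (hsub hA).2).ne hAK

/-- Lemma 4.1 (2): for every `K > 0` there is `ε₀ > 0` such that for all `0 < ε < ε₀`: if
`A_t`, `t ∈ [0,1]`, is a continuous path of positive definite Hermitian matrices with
`F_ε(A_t) < K` for all `t` and `S_1(A_0⁻¹) < K`, then `S_1(A_t⁻¹) < K + 1` for all `t`.
In particular, the connected component of `{F_ε < K}` containing `{S_1(A⁻¹) < K}` is contained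
in `{S_1(A⁻¹) < K + 1}`. -/
theorem statement10 (n : ℕ) (K : ℝ) (hK : 0 < K) :
    ∃ ε₀ > 0, ∀ ε : ℝ, 0 < ε → ε < ε₀ →
      (∀ A : ℝ → Matrix (Fin n) (Fin n) ℝ, ContinuousOn A (Set.Icc 0 1) →
        (∀ t ∈ Set.Icc (0 : ℝ) 1, (A t).PosDef) →
        (∀ t ∈ Set.Icc (0 : ℝ) 1, Fe n ε (A t) < K) →
        S1inv n (A 0) < K →
        ∀ t ∈ Set.Icc (0 : ℝ) 1, S1inv n (A t) < K + 1) ∧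
      (∀ A₀ : Matrix (Fin n) (Fin n) ℝ, A₀.PosDef → S1inv n A₀ < K →
        connectedComponentIn {A : Matrix (Fin n) (Fin n) ℝ | A.PosDef ∧ Fe n ε A < K} A₀ ⊆
          {A : Matrix (Fin n) (Fin n) ℝ | S1inv n A < K + 1}) := by
  have hc : 0 < ((K + 1) / n) ^ n := by
    rcases n.eq_zero_or_pos with rfl | hn
    · simp
    · positivity
  refine ⟨(((K + 1) / n) ^ n)⁻¹, inv_pos.mpr hc, fun ε hε hεε₀ => ?_⟩
  have hεK : ε * ((K + 1) / n) ^ n < 1 := (lt_mul_inv_iff₀ hc).mp (by rwa [one_mul])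
  refine ⟨fun A hA hpd hF h0 t ht => ?_,
    fun A₀ _ hA₀ => connectedComponentIn_subset_S1inv_lt hε.le hεK hA₀⟩
  have hpath : A '' Set.Icc 0 1 ⊆ connectedComponentIn {A | A.PosDef ∧ Fe n ε A < K} (A 0) :=
    (isPreconnected_Icc.image A hA).subset_connectedComponentIn
      ⟨0, Set.left_mem_Icc.mpr zero_le_one, rfl⟩
      (by rintro _ ⟨s, hs, rfl⟩; exact ⟨hpd s hs, hF s hs⟩)
  exact connectedComponentIn_subset_S1inv_lt hε.le hεK h0 (hpath ⟨t, ht, rfl⟩)
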